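/- Let q_1 be the unique root in (1,2) of x^6 - x^4 - x^3 - 2x^2 - x - 1 = 0, with y_3 = Π(0 1^3 (10)^∞) and z_3 = Π(1 0^3 (01)^∞), and T_0(x) = q_1 x, T_1(x) = q_1 x - 1. Then T_0(T_1(y_3)) = z_3 and T_1(T_0(z_3)) = y_3. -/

import Mathlib

/-- `y q j = Π(0 1^j (10)^∞)`: digit 0, then j ones, then (10) repeated. -/
noncomputable def yExp (q : ℝ) (j : ℕ) : ℝ :=
  ∑' i : ℕ, (if i = 0 then (0:ℝ) else if i ≤ j then 1
    else if (i - (j + 1)) % 2 = 0 then 1 else 0) / q ^ (i + 1)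

/-- `z q j = Π(1 0^j (01)^∞)`: digit 1, then j zeros, then (01) repeated. -/
noncomputable def zExp (q : ℝ) (j : ℕ) : ℝ :=
  ∑' i : ℕ, (if i = 0 then (1:ℝ) else if i ≤ j then 0
    else if (i - (j + 1)) % 2 = 0 then 0 else 1) / q ^ (i + 1)

/-! Summing the geometric tails gives `y_j = q⁻² + ⋯ + q^{-(j+1)} + 1 / (q^j (q² - 1))` and
`z_j = q⁻¹ + 1 / (q^{j+1} (q² - 1))`. For `j = 3`, after clearing denominators, each of the two
identities is `± (q - 1)` times the sextic defining `q₁`. -/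

section

variable {q : ℝ}

lemma hasSum_ite_even_div_pow (hq : 1 < q) (a b : ℝ) (m : ℕ) :
    HasSum (fun i : ℕ => (if i % 2 = 0 then a else b) / q ^ (i + m))
      (q * (a * q + b) / (q ^ m * (q ^ 2 - 1))) := by
  have hq0 : q ≠ 0 := by positivity
  have hq2 : q ^ 2 - 1 ≠ 0 := by nlinarith
  have hr : (q ^ 2)⁻¹ < 1 := inv_lt_one_of_one_lt₀ (one_lt_pow₀ hq two_ne_zero)
  have hgeom := hasSum_geometric_of_lt_one (by positivity) hr
  have hval : q * (a * q + b) / (q ^ m * (q ^ 2 - 1)) =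
      a / q ^ m * (1 - (q ^ 2)⁻¹)⁻¹ + b / q ^ (m + 1) * (1 - (q ^ 2)⁻¹)⁻¹ := by
    field_simp
    ring
  rw [hval]
  refine HasSum.even_add_odd ?_ ?_
  · refine (hgeom.mul_left (a / q ^ m)).congr_fun fun k => ?_
    simp only [Nat.mul_mod_right, if_true]
    rw [inv_pow, ← pow_mul, pow_add]
    field_simp
  · refine (hgeom.mul_left (b / q ^ (m + 1))).congr_fun fun k => ?_
    simp only [Nat.mul_add_mod, Nat.one_mod, one_ne_zero, if_false]
    rw [inv_pow, ← pow_mul, pow_add, pow_add]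
    field_simp
    ring

lemma yExp_eq (hq : 1 < q) (j : ℕ) :
    yExp q j = ∑ i ∈ Finset.range j, 1 / q ^ (i + 2) + 1 / (q ^ j * (q ^ 2 - 1)) := by
  have hq0 : q ≠ 0 := by positivity
  have hq2 : q ^ 2 - 1 ≠ 0 := by nlinarith
  unfold yExp
  refine ((hasSum_nat_add_iff (j + 1)).1 ((hasSum_ite_even_div_pow hq 1 0 (j + 2)).congr_fun
    fun i => ?_)).tsum_eq.trans ?_
  · simp only [Nat.add_eq_zero_iff, one_ne_zero, and_false, ↓reduceIte, add_tsub_cancel_right]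
    rw [if_neg (by omega), show i + (j + 1) + 1 = i + (j + 2) by omega]
  · rw [Finset.sum_range_succ']
    simp only [one_mul, add_zero, Nat.add_eq_zero_iff, one_ne_zero, and_false, ↓reduceIte,
      Order.add_one_le_iff, Nat.reduceSubDiff, zero_add, pow_one, zero_div, one_div, mul_inv_rev]
    rw [Finset.sum_congr rfl fun x hx => by rw [if_pos (Finset.mem_range.1 hx)]]
    field_simp
    ring

lemma zExp_eq (hq : 1 < q) (j : ℕ) :
    zExp q j = 1 / q + 1 / (q ^ (j + 1) * (q ^ 2 - 1)) := by
  have hq0 : q ≠ 0 := by positivity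
  have hq2 : q ^ 2 - 1 ≠ 0 := by nlinarith
  unfold zExp
  refine ((hasSum_nat_add_iff (j + 1)).1 ((hasSum_ite_even_div_pow hq 0 1 (j + 2)).congr_fun
    fun i => ?_)).tsum_eq.trans ?_
  · simp only [Nat.add_eq_zero_iff, one_ne_zero, and_false, ↓reduceIte, add_tsub_cancel_right]
    rw [if_neg (by omega), show i + (j + 1) + 1 = i + (j + 2) by omega]
  · rw [Finset.sum_range_succ']
    simp only [zero_mul, zero_add, mul_one, Nat.add_eq_zero_iff, one_ne_zero, and_false, ↓reduceIte,
      Order.add_one_le_iff, Nat.reduceSubDiff, pow_one, one_div, mul_inv_rev]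
    rw [Finset.sum_congr rfl fun x hx => by rw [if_pos (Finset.mem_range.1 hx)]]
    simp only [zero_div, Finset.sum_const_zero]
    field_simp
    ring

end

theorem y3_z3_cycle_general (q1 : ℝ)
    (hq1 : q1 ∈ Set.Ioo (1:ℝ) 2 ∧ q1^6 - q1^4 - q1^3 - 2*q1^2 - q1 - 1 = 0) :
    q1 * (q1 * yExp q1 3 - 1) = zExp q1 3 ∧
    q1 * (q1 * zExp q1 3) - 1 = yExp q1 3 := by
  obtain ⟨⟨hq, -⟩, hsextic⟩ := hq1
  have hq0 : q1 ≠ 0 := by positivity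
  have hq2 : q1 ^ 2 - 1 ≠ 0 := by nlinarith
  rw [yExp_eq hq, zExp_eq hq]
  simp only [Finset.sum_range_succ, Finset.sum_range_zero, zero_add, Nat.reduceAdd]
  constructor
  · field_simp
    linear_combination (1 - q1) * hsextic
  · field_simp
    linear_combination (q1 - 1) * hsextic

/-- at q₁, T₀(T₁(y₃)) = z₃ and T₁(T₀(z₃)) = y₃. -/
theorem y3_z3_cycle (q1 : ℝ)
    (hq1 : q1 ∈ Set.Ioo (1:ℝ) 2 ∧ q1^6 - q1^4 - q1^3 - 2*q1^2 - q1 - 1 = 0)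
    (hq1u : ∀ q : ℝ, q ∈ Set.Ioo (1:ℝ) 2 → q^6 - q^4 - q^3 - 2*q^2 - q - 1 = 0 → q = q1) :
    q1 * (q1 * yExp q1 3 - 1) = zExp q1 3 ∧
    q1 * (q1 * zExp q1 3) - 1 = yExp q1 3 :=
  y3_z3_cycle_general q1 hq1
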